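/- arXiv:2307.07432 — 2 statements merged into one kernel-verified Lean document; each statement's English description precedes it below -/
import Mathlib

section
/- For all t, q > 0, the weight function 𝒲_o(t,q) := 1 − 3(1+4t²)(1+4q²)[(t(3+4t²))² + (q(3+4q²))²] / [(t²+q²)(3+4t²−4tq+4q²)²(3+4t²+4tq+4q²)²] satisfies 0 < c ≤ 𝒲_o(t,q) ≤ C for universal constants c, C > 0 (i.e., 𝒲_o(t,q) ∼ 1 uniformly on (0,∞)²). -/
/-!
Write `𝒲_o = 1 - N/D`. Then `N ≥ 0` gives `𝒲_o ≤ 1`, and `𝒲_o ≥ 1/2` because, with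
`s = t² + q²`, the difference `D - 2N` is a polynomial in `s`, `t²q²` and `(t² - q²)²` with
nonnegative coefficients.
-/

/-- The odd-part weight function `𝒲_o(t,q)`. -/
noncomputable def Wo (t q : ℝ) : ℝ :=
  1 - 3 * (1 + 4 * t ^ 2) * (1 + 4 * q ^ 2) * ((t * (3 + 4 * t ^ 2)) ^ 2 + (q * (3 + 4 * q ^ 2)) ^ 2)
    / ((t ^ 2 + q ^ 2) * (3 + 4 * t ^ 2 - 4 * t * q + 4 * q ^ 2) ^ 2
        * (3 + 4 * t ^ 2 + 4 * t * q + 4 * q ^ 2) ^ 2)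

theorem denominator_sub_two_mul_numerator_eq (t q : ℝ) :
    (t ^ 2 + q ^ 2) * (3 + 4 * t ^ 2 - 4 * t * q + 4 * q ^ 2) ^ 2
        * (3 + 4 * t ^ 2 + 4 * t * q + 4 * q ^ 2) ^ 2
      - 2 * (3 * (1 + 4 * t ^ 2) * (1 + 4 * q ^ 2)
        * ((t * (3 + 4 * t ^ 2)) ^ 2 + (q * (3 + 4 * q ^ 2)) ^ 2))
    = 27 * (t ^ 2 + q ^ 2) + 72 * (t ^ 2 + q ^ 2) ^ 2 + 192 * (t ^ 2 + q ^ 2) ^ 3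
        + 96 * (t ^ 2 + q ^ 2) ^ 4
        + (288 + 288 * (t ^ 2 + q ^ 2) + 384 * (t ^ 2 + q ^ 2) ^ 2) * (t * q) ^ 2
        + 768 * (t ^ 2 + q ^ 2) * (t * q) ^ 4
        + (288 + 256 * (t ^ 2 + q ^ 2)) * (t ^ 2 - q ^ 2) ^ 4 := by
  ring

theorem two_mul_numerator_le_denominator (t q : ℝ) :
    2 * (3 * (1 + 4 * t ^ 2) * (1 + 4 * q ^ 2)
        * ((t * (3 + 4 * t ^ 2)) ^ 2 + (q * (3 + 4 * q ^ 2)) ^ 2))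
      ≤ (t ^ 2 + q ^ 2) * (3 + 4 * t ^ 2 - 4 * t * q + 4 * q ^ 2) ^ 2
        * (3 + 4 * t ^ 2 + 4 * t * q + 4 * q ^ 2) ^ 2 := by
  rw [← sub_nonneg, denominator_sub_two_mul_numerator_eq]
  positivity

theorem one_half_le_Wo (t q : ℝ) : 1 / 2 ≤ Wo t q := by
  rw [Wo, le_sub_comm]
  refine div_le_of_le_mul₀ (by positivity) (by norm_num) ?_
  linarith [two_mul_numerator_le_denominator t q]

theorem Wo_le_one (t q : ℝ) : Wo t q ≤ 1 :=
  sub_le_self _ (by positivity)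

/-- There are universal constants `0 < c ≤ C` with `c ≤ 𝒲_o(t,q) ≤ C` for all `t, q > 0`,
i.e. `𝒲_o(t,q) ∼ 1` uniformly on `(0,∞)²`. -/
theorem Wo_comparable_to_one :
    ∃ c C : ℝ, 0 < c ∧ 0 < C ∧
      ∀ t q : ℝ, 0 < t → 0 < q → c ≤ Wo t q ∧ Wo t q ≤ C :=
  ⟨1 / 2, 1, by norm_num, one_pos, fun t q _ _ => ⟨one_half_le_Wo t q, Wo_le_one t q⟩⟩
end

section
/- Let ℓ(x,y) := 3·sign(xy)·(x²+xy)/(x³−y³) for nonzero real x ≠ y with x³ ≠ y³. Then for any continuous compactly supported g : ℝ → ℝ, the double integral over the positive quadrant satisfies ∫₀^∞ ∫₀^∞ (g(x))² · [x^{4/3} − 2x y^{1/3} − 2x^{1/3}y + y^{4/3}] / [(x+y)² x^{2/3} y^{2/3}] dx dy = 0, provided the integral converges absolutely. -/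
/-!
After the substitution `x = a³`, `y = t³` the kernel becomes the rational function
`3 (a⁴ - 2a³t - 2at³ + t⁴) / (a² (a³ + t³)²)`, which is the derivative in `t` of
`3t (a - t) / (a² (a³ + t³))`. That primitive vanishes at `t = 0` and as `t → ∞`, and the
kernel decays like `t⁻²`, so each inner integral is `0`; Fubini gives the theorem.
-/

open MeasureTheory Set Filter Topology

noncomputable section

def cuspKernel (x y : ℝ) : ℝ :=
  (x ^ ((4 : ℝ) / 3) - 2 * x * y ^ ((1 : ℝ) / 3) - 2 * x ^ ((1 : ℝ) / 3) * y
      + y ^ ((4 : ℝ) / 3)) / ((x + y) ^ 2 * x ^ ((2 : ℝ) / 3) * y ^ ((2 : ℝ) / 3))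

def cubeKernel (a t : ℝ) : ℝ :=
  3 * (a ^ 4 - 2 * a ^ 3 * t - 2 * a * t ^ 3 + t ^ 4) / (a ^ 2 * (a ^ 3 + t ^ 3) ^ 2)

def cubeKernelPrimitive (a t : ℝ) : ℝ := 3 * t * (a - t) / (a ^ 2 * (a ^ 3 + t ^ 3))

end

lemma pow_three_rpow_div_three {a : ℝ} (ha : 0 ≤ a) (n : ℕ) :
    (a ^ 3) ^ ((n : ℝ) / 3) = a ^ n := by
  rw [← Real.rpow_natCast a 3, ← Real.rpow_mul ha, ← Real.rpow_natCast]
  congr 1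
  push_cast
  ring

lemma cuspKernel_cube {a t : ℝ} (ha : 0 < a) (ht : 0 < t) :
    3 * t ^ 2 * cuspKernel (a ^ 3) (t ^ 3) = cubeKernel a t := by
  have h1 := pow_three_rpow_div_three ha.le 1
  have h2 := pow_three_rpow_div_three ha.le 2
  have h4 := pow_three_rpow_div_three ha.le 4
  have h1' := pow_three_rpow_div_three ht.le 1
  have h2' := pow_three_rpow_div_three ht.le 2
  have h4' := pow_three_rpow_div_three ht.le 4
  push_cast at h1 h2 h4 h1' h2' h4'
  rw [cuspKernel, cubeKernel, h1, h2, h4, h1', h2', h4']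
  field_simp

lemma hasDerivAt_cubeKernelPrimitive {a t : ℝ} (ha : 0 < a) (ht : 0 ≤ t) :
    HasDerivAt (cubeKernelPrimitive a) (cubeKernel a t) t := by
  have hden : a ^ 2 * (a ^ 3 + t ^ 3) ≠ 0 := by positivity
  have h := (((hasDerivAt_id t).const_mul 3).mul ((hasDerivAt_id t).const_sub a)).div
    (((hasDerivAt_pow 3 t).const_add (a ^ 3)).const_mul (a ^ 2)) hden
  refine h.congr_deriv ?_
  simp only [cubeKernel, id, Pi.mul_apply]
  field_simp
  ring

lemma tendsto_cubeKernelPrimitive_atTop {a : ℝ} (ha : 0 < a) :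
    Tendsto (cubeKernelPrimitive a) atTop (𝓝 0) := by
  have hbound : Tendsto (fun t : ℝ => 3 / (a ^ 2 * t)) atTop (𝓝 0) :=
    tendsto_const_nhds.div_atTop (tendsto_id.const_mul_atTop (pow_pos ha 2))
  refine squeeze_zero_norm' ?_ hbound
  filter_upwards [eventually_ge_atTop a] with t hat
  have ht : 0 < t := ha.trans_le hat
  have hnum : |3 * t * (a - t)| = 3 * t * (t - a) := by
    rw [abs_of_nonpos (by nlinarith)]; ring
  rw [Real.norm_eq_abs, cubeKernelPrimitive, abs_div, hnum, abs_of_pos (by positivity),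
    div_le_div_iff₀ (by positivity) (by positivity)]
  nlinarith [mul_pos (pow_pos ha 2) (mul_pos (pow_pos ht 2) ha), pow_pos ha 5]

lemma continuousOn_cubeKernel {a : ℝ} (ha : 0 < a) : ContinuousOn (cubeKernel a) (Ici 0) := by
  refine ContinuousOn.div (by fun_prop) (by fun_prop) fun t ht => ?_
  have : (0 : ℝ) ≤ t := ht
  positivity

lemma abs_cubeKernel_le {a t : ℝ} (ha : 0 < a) (hat : a ≤ t) :
    |cubeKernel a t| ≤ 18 / a ^ 2 * t ^ (-2 : ℝ) := by
  have ht : 0 < t := ha.trans_le hat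
  have hN : |a ^ 4 - 2 * a ^ 3 * t - 2 * a * t ^ 3 + t ^ 4| ≤ 6 * t ^ 4 := by
    have h4 : a ^ 4 ≤ t ^ 4 := by gcongr
    have h3 : a ^ 3 * t ≤ t ^ 4 := by
      calc a ^ 3 * t ≤ t ^ 3 * t := by gcongr
        _ = t ^ 4 := by ring
    have h1 : a * t ^ 3 ≤ t ^ 4 := by
      calc a * t ^ 3 ≤ t * t ^ 3 := by gcongr
        _ = t ^ 4 := by ring
    rw [abs_le]
    constructor <;> nlinarith [pow_pos ha 4, pow_pos ha 3, pow_pos ht 3]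
  have hD : a ^ 2 * t ^ 6 ≤ a ^ 2 * (a ^ 3 + t ^ 3) ^ 2 := by
    gcongr
    nlinarith [pow_pos ha 3, pow_pos ht 3]
  rw [Real.rpow_neg ht.le, Real.rpow_two, cubeKernel, abs_div, abs_mul, abs_of_pos three_pos,
    abs_of_pos (by positivity : (0 : ℝ) < a ^ 2 * (a ^ 3 + t ^ 3) ^ 2)]
  calc 3 * |a ^ 4 - 2 * a ^ 3 * t - 2 * a * t ^ 3 + t ^ 4| / (a ^ 2 * (a ^ 3 + t ^ 3) ^ 2)
      ≤ 3 * (6 * t ^ 4) / (a ^ 2 * t ^ 6) := by gcongr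
    _ = 18 / a ^ 2 * (t ^ 2)⁻¹ := by field_simp; ring

lemma integrableOn_cubeKernel {a : ℝ} (ha : 0 < a) : IntegrableOn (cubeKernel a) (Ioi 0) := by
  have hnear : IntegrableOn (cubeKernel a) (Ioc 0 a) :=
    ((continuousOn_cubeKernel ha).mono Icc_subset_Ici_self).integrableOn_Icc.mono_set
      Ioc_subset_Icc_self
  have hfar : IntegrableOn (cubeKernel a) (Ioi a) := by
    have hdom : IntegrableOn (fun t : ℝ => 18 / a ^ 2 * t ^ (-2 : ℝ)) (Ioi a) :=
      (integrableOn_Ioi_rpow_of_lt (by norm_num) ha).const_mul _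
    refine hdom.mono' (((continuousOn_cubeKernel ha).mono fun t ht => le_of_lt (ha.trans ht))
      |>.aestronglyMeasurable measurableSet_Ioi) ?_
    filter_upwards [ae_restrict_mem measurableSet_Ioi] with t ht
    exact abs_cubeKernel_le ha (le_of_lt ht)
  rw [← Ioc_union_Ioi_eq_Ioi ha.le]
  exact hnear.union hfar

lemma integral_cubeKernel {a : ℝ} (ha : 0 < a) : ∫ t in Ioi 0, cubeKernel a t = 0 := by
  rw [integral_Ioi_of_hasDerivAt_of_tendsto' (fun t ht => hasDerivAt_cubeKernelPrimitive ha ht)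
    (integrableOn_cubeKernel ha) (tendsto_cubeKernelPrimitive_atTop ha)]
  simp [cubeKernelPrimitive]

lemma integral_cuspKernel {x : ℝ} (hx : 0 < x) : ∫ y in Ioi 0, cuspKernel x y = 0 := by
  set a := x ^ ((1 : ℝ) / 3)
  have ha : 0 < a := by positivity
  have hxa : x = a ^ 3 := by
    rw [← Real.rpow_natCast, ← Real.rpow_mul hx.le]; norm_num
  calc ∫ y in Ioi 0, cuspKernel x y = ∫ t in Ioi 0, cubeKernel a t := by
        rw [← integral_comp_rpow_Ioi (cuspKernel x) (by norm_num : (3 : ℝ) ≠ 0)]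
        refine setIntegral_congr_fun measurableSet_Ioi fun t (ht : 0 < t) => ?_
        rw [← cuspKernel_cube ha ht, hxa, smul_eq_mul]
        norm_num
    _ = 0 := integral_cubeKernel ha

theorem cusp_odd_vanishing_general (g : ℝ → ℝ)
    (hint : IntegrableOn
      (fun p : ℝ × ℝ => (g p.1) ^ 2 *
        (p.1 ^ ((4 : ℝ) / 3) - 2 * p.1 * p.2 ^ ((1 : ℝ) / 3)
          - 2 * p.1 ^ ((1 : ℝ) / 3) * p.2 + p.2 ^ ((4 : ℝ) / 3))
        / ((p.1 + p.2) ^ 2 * p.1 ^ ((2 : ℝ) / 3) * p.2 ^ ((2 : ℝ) / 3)))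
      (Ioi (0 : ℝ) ×ˢ Ioi (0 : ℝ))) :
    ∫ p in Ioi (0 : ℝ) ×ˢ Ioi (0 : ℝ),
      (g p.1) ^ 2 *
        (p.1 ^ ((4 : ℝ) / 3) - 2 * p.1 * p.2 ^ ((1 : ℝ) / 3)
          - 2 * p.1 ^ ((1 : ℝ) / 3) * p.2 + p.2 ^ ((4 : ℝ) / 3))
        / ((p.1 + p.2) ^ 2 * p.1 ^ ((2 : ℝ) / 3) * p.2 ^ ((2 : ℝ) / 3)) = 0 := by
  rw [Measure.volume_eq_prod] at hint ⊢
  rw [setIntegral_prod _ hint]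
  refine setIntegral_eq_zero_of_forall_eq_zero fun x (hx : 0 < x) => ?_
  simp_rw [mul_div_assoc, integral_const_mul]
  exact mul_eq_zero_of_right _ (integral_cuspKernel hx)

/-- The vanishing identity used in the computation of the cusp variance for odd test
functions: for any continuous compactly supported `g : ℝ → ℝ`, if the double integral over
the positive quadrant of
`(g(x))² · [x^{4/3} − 2x y^{1/3} − 2x^{1/3} y + y^{4/3}] / [(x+y)² x^{2/3} y^{2/3}]`
converges absolutely, then it equals `0`. -/
theorem cusp_odd_vanishing (g : ℝ → ℝ) (hg : Continuous g) (hsupp : HasCompactSupport g)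
    (hint : IntegrableOn
      (fun p : ℝ × ℝ => (g p.1) ^ 2 *
        (p.1 ^ ((4 : ℝ) / 3) - 2 * p.1 * p.2 ^ ((1 : ℝ) / 3)
          - 2 * p.1 ^ ((1 : ℝ) / 3) * p.2 + p.2 ^ ((4 : ℝ) / 3))
        / ((p.1 + p.2) ^ 2 * p.1 ^ ((2 : ℝ) / 3) * p.2 ^ ((2 : ℝ) / 3)))
      (Ioi (0 : ℝ) ×ˢ Ioi (0 : ℝ))) :
    ∫ p in Ioi (0 : ℝ) ×ˢ Ioi (0 : ℝ),
      (g p.1) ^ 2 *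
        (p.1 ^ ((4 : ℝ) / 3) - 2 * p.1 * p.2 ^ ((1 : ℝ) / 3)
          - 2 * p.1 ^ ((1 : ℝ) / 3) * p.2 + p.2 ^ ((4 : ℝ) / 3))
        / ((p.1 + p.2) ^ 2 * p.1 ^ ((2 : ℝ) / 3) * p.2 ^ ((2 : ℝ) / 3)) = 0 :=
  cusp_odd_vanishing_general g hint
end
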